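/- Let C = {(x:y:z) ∈ ℙ²(ℂ) : x·z² + y³ = 0} be the cuspidal plane cubic, and let p₁, …, pₙ ∈ C. If the stabilizer subgroup {g ∈ SL(3,ℂ) : g·C = C and g·pᵢ = pᵢ for all i} is infinite, then each pᵢ is either the cuspidal singularity (1:0:0) or the smooth inflection point (0:0:1). -/
import Mathlib


open Matrix

noncomputable section

/-- The special linear group `SL(3, ℂ)`. -/
abbrev SL3 := Matrix.SpecialLinearGroup (Fin 3) ℂ

/-- The complex projective plane `ℙ²(ℂ)`. -/
abbrev P2 := Projectivization ℂ (Fin 3 → ℂ)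

/-- The action of `SL(3, ℂ)` on `ℙ²(ℂ)` induced by the linear action on `ℂ³`. -/
noncomputable def act (g : SL3) (p : P2) : P2 :=
  Projectivization.map (Matrix.SpecialLinearGroup.toLin' g).toLinearMap
    (Matrix.SpecialLinearGroup.toLin' g).injective p

/-- The cuspidal plane cubic `{x·z² + y³ = 0}`. -/
def Ccusp : Set P2 := {p : P2 | p.rep 0 * p.rep 2 ^ 2 + p.rep 1 ^ 3 = 0}

/-- The point `(1:0:0)`, the cusp of `Ccusp`. -/
def ptCusp : P2 := Projectivization.mk ℂ ![1, 0, 0] (by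
  intro h; simpa using congrFun h 0)

/-- The point `(0:0:1)`, the smooth inflection point of `Ccusp`. -/
def ptFlex : P2 := Projectivization.mk ℂ ![0, 0, 1] (by
  intro h; simpa using congrFun h 2)

lemma mulVec_ne (g : SL3) {v : Fin 3 → ℂ} (hv : v ≠ 0) :
    (g : Matrix (Fin 3) (Fin 3) ℂ).mulVec v ≠ 0 := by
  intro h
  apply hv
  have h2 : Matrix.SpecialLinearGroup.toLin' g v = Matrix.SpecialLinearGroup.toLin' g 0 := by
    rw [map_zero]
    rw [Matrix.SpecialLinearGroup.toLin'_apply, Matrix.toLin'_apply]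
    exact h
  exact (Matrix.SpecialLinearGroup.toLin' g).injective h2

lemma act_mk (g : SL3) (v : Fin 3 → ℂ) (hv : v ≠ 0) :
    act g (Projectivization.mk ℂ v hv) =
      Projectivization.mk ℂ ((g : Matrix (Fin 3) (Fin 3) ℂ).mulVec v) (mulVec_ne g hv) := by
  unfold act
  rw [Projectivization.map_mk]
  congr 1

lemma mem_Ccusp_mk {v : Fin 3 → ℂ} (hv : v ≠ 0) :
    Projectivization.mk ℂ v hv ∈ Ccusp ↔ v 0 * v 2 ^ 2 + v 1 ^ 3 = 0 := by
  obtain ⟨u, hu⟩ := (Projectivization.mk_eq_mk_iff ℂ _ _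
      (Projectivization.rep_nonzero _) hv).mp (Projectivization.mk_rep (Projectivization.mk ℂ v hv))
  have h0 := congrFun hu 0
  have h1 := congrFun hu 1
  have h2 := congrFun hu 2
  simp only [Pi.smul_apply, Units.smul_def, smul_eq_mul] at h0 h1 h2
  have key : (Projectivization.mk ℂ v hv).rep 0 * (Projectivization.mk ℂ v hv).rep 2 ^ 2
      + (Projectivization.mk ℂ v hv).rep 1 ^ 3 = (u:ℂ)^3 * (v 0 * v 2 ^ 2 + v 1 ^ 3) := by
    rw [← h0, ← h1, ← h2]; ring
  constructor
  · intro h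
    have h' : (u:ℂ)^3 * (v 0 * v 2 ^ 2 + v 1 ^ 3) = 0 := by rw [← key]; exact h
    rcases mul_eq_zero.mp h' with h'' | h''
    · exact absurd (pow_eq_zero_iff (by norm_num)|>.mp h'') u.ne_zero
    · exact h''
  · intro h
    show _ = 0
    rw [key, h, mul_zero]

open Polynomial in
lemma classify (g : SL3) (hg : ∀ x ∈ Ccusp, act g x ∈ Ccusp) :
    ∃ t : ℂ, t ≠ 0 ∧
      (g : Matrix (Fin 3) (Fin 3) ℂ) = !![(t^5)⁻¹, 0, 0; 0, t, 0; 0, 0, t^4] := by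
  obtain ⟨a, b, c, d, e, f, p, q, r, hM⟩ :
      ∃ a b c d e f p q r, (g : Matrix (Fin 3) (Fin 3) ℂ) = !![a,b,c;d,e,f;p,q,r] :=
    ⟨_,_,_,_,_,_,_,_,_, by ext i j; fin_cases i <;> fin_cases j <;> rfl⟩
  have hdet : a*e*r - a*f*q - b*d*r + b*f*p + c*d*q - c*e*p = 1 := by
    have h := g.2
    rw [hM, Matrix.det_fin_three] at h
    simp only [Matrix.cons_val', Matrix.cons_val_zero, Matrix.cons_val_one, Matrix.head_cons,
      Matrix.empty_val', Matrix.cons_val_fin_one, Matrix.head_fin_const, Matrix.of_apply,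
      Matrix.cons_val_two, Matrix.tail_cons] at h
    linear_combination h
  have hcurve : ∀ s : ℂ,
      (a*(-s^3) + b*s + c) * (p*(-s^3) + q*s + r)^2 + (d*(-s^3) + e*s + f)^3 = 0 := by
    intro s
    have hne : (![-s^3, s, 1] : Fin 3 → ℂ) ≠ 0 := fun h => by simpa using congrFun h 2
    have hmem : Projectivization.mk ℂ ![-s^3, s, 1] hne ∈ Ccusp := by
      rw [mem_Ccusp_mk]
      simp only [Matrix.cons_val_zero, Matrix.cons_val_one, Matrix.head_cons,
        Matrix.cons_val_two, Matrix.tail_cons]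
      ring
    have h2 := hg _ hmem
    rw [act_mk g _ hne, mem_Ccusp_mk] at h2
    rw [hM] at h2
    simp only [Matrix.mulVec, dotProduct, Fin.sum_univ_three,
      Matrix.cons_val_zero, Matrix.cons_val_one, Matrix.head_cons,
      Matrix.cons_val_two, Matrix.tail_cons, Matrix.cons_val', Matrix.head_fin_const,
      Matrix.empty_val', Matrix.cons_val_fin_one, Matrix.of_apply] at h2
    linear_combination h2
  have hΦ : (C (c*r^2 + f^3) * X^0 + C (3*e*f^2 + 2*c*q*r + b*r^2) * X^1 + C (3*e^2*f + c*q^2 + 2*b*q*r) * X^2 + C (e^3 - 3*d*f^2 - 2*c*p*r + b*q^2 - a*r^2) * X^3 + C (-(6*d*e*f) - 2*c*p*q - 2*b*p*r - 2*a*q*r) * X^4 + C (-(3*d*e^2) - 2*b*p*q - a*q^2) * X^5 + C (3*d^2*f + c*p^2 + 2*a*p*r) * X^6 + C (3*d^2*e + b*p^2 + 2*a*p*q) * X^7 + C (-(d^3) - a*p^2) * X^9 : ℂ[X]) = 0 := by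
    apply Polynomial.funext
    intro s
    simp only [Polynomial.eval_add, Polynomial.eval_mul, Polynomial.eval_pow,
      Polynomial.eval_C, Polynomial.eval_X, Polynomial.eval_zero]
    linear_combination hcurve s
  have hco : ∀ k : ℕ, (C (c*r^2 + f^3) * X^0 + C (3*e*f^2 + 2*c*q*r + b*r^2) * X^1 + C (3*e^2*f + c*q^2 + 2*b*q*r) * X^2 + C (e^3 - 3*d*f^2 - 2*c*p*r + b*q^2 - a*r^2) * X^3 + C (-(6*d*e*f) - 2*c*p*q - 2*b*p*r - 2*a*q*r) * X^4 + C (-(3*d*e^2) - 2*b*p*q - a*q^2) * X^5 + C (3*d^2*f + c*p^2 + 2*a*p*r) * X^6 + C (3*d^2*e + b*p^2 + 2*a*p*q) * X^7 + C (-(d^3) - a*p^2) * X^9 : ℂ[X]).coeff k = 0 := by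
    intro k; rw [hΦ, Polynomial.coeff_zero]
  have h0 : c*r^2 + f^3 = 0 := by
    have := hco 0
    simp only [Polynomial.coeff_add, Polynomial.coeff_C_mul_X_pow] at this
    norm_num at this
    linear_combination this
  have h1 : 3*e*f^2 + 2*c*q*r + b*r^2 = 0 := by
    have := hco 1
    simp only [Polynomial.coeff_add, Polynomial.coeff_C_mul_X_pow] at this
    norm_num at this
    linear_combination this
  have h2 : 3*e^2*f + c*q^2 + 2*b*q*r = 0 := by
    have := hco 2
    simp only [Polynomial.coeff_add, Polynomial.coeff_C_mul_X_pow] at this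
    norm_num at this
    linear_combination this
  have h3 : e^3 - 3*d*f^2 - 2*c*p*r + b*q^2 - a*r^2 = 0 := by
    have := hco 3
    simp only [Polynomial.coeff_add, Polynomial.coeff_C_mul_X_pow] at this
    norm_num at this
    linear_combination this
  have h4 : -(6*d*e*f) - 2*c*p*q - 2*b*p*r - 2*a*q*r = 0 := by
    have := hco 4
    simp only [Polynomial.coeff_add, Polynomial.coeff_C_mul_X_pow] at this
    norm_num at this
    linear_combination this
  have h5 : -(3*d*e^2) - 2*b*p*q - a*q^2 = 0 := by
    have := hco 5
    simp only [Polynomial.coeff_add, Polynomial.coeff_C_mul_X_pow] at this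
    norm_num at this
    linear_combination this
  have h6 : 3*d^2*f + c*p^2 + 2*a*p*r = 0 := by
    have := hco 6
    simp only [Polynomial.coeff_add, Polynomial.coeff_C_mul_X_pow] at this
    norm_num at this
    linear_combination this
  have h7 : 3*d^2*e + b*p^2 + 2*a*p*q = 0 := by
    have := hco 7
    simp only [Polynomial.coeff_add, Polynomial.coeff_C_mul_X_pow] at this
    norm_num at this
    linear_combination this
  have h9 : -(d^3) - a*p^2 = 0 := by
    have := hco 9
    simp only [Polynomial.coeff_add, Polynomial.coeff_C_mul_X_pow] at this
    norm_num at this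
    linear_combination this
  clear hΦ hco hcurve hg
  by_cases hp : p = 0
  · subst hp
    have hd : d = 0 := by
      have h' : d^3 = 0 := by linear_combination -h9
      exact pow_eq_zero_iff (by norm_num) |>.mp h'
    subst hd
    have ha : a ≠ 0 := by
      intro h'; subst h'
      exact one_ne_zero (by linear_combination -hdet)
    have hq : q = 0 := by
      have h' : a * q^2 = 0 := by linear_combination -h5
      rcases mul_eq_zero.mp h' with h''|h''
      · exact absurd h'' ha
      · exact pow_eq_zero_iff (by norm_num) |>.mp h''
    subst hq
    have he : e ≠ 0 := by
      intro h'; subst h'; exact one_ne_zero (by linear_combination -hdet)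
    have hr : r ≠ 0 := by
      intro h'; subst h'; exact one_ne_zero (by linear_combination -hdet)
    have hf : f = 0 := by
      have h' : e^2 * f = 0 := by linear_combination (1/3 : ℂ) * h2
      rcases mul_eq_zero.mp h' with h''|h''
      · exact absurd (pow_eq_zero_iff (by norm_num) |>.mp h'') he
      · exact h''
    subst hf
    have hc : c = 0 := by
      have h' : c * r^2 = 0 := by linear_combination h0
      rcases mul_eq_zero.mp h' with h''|h''
      · exact h''
      · exact absurd (pow_eq_zero_iff (by norm_num)|>.mp h'') hr
    subst hc
    have hb : b = 0 := by
      have h' : b * r^2 = 0 := by linear_combination h1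
      rcases mul_eq_zero.mp h' with h''|h''
      · exact h''
      · exact absurd (pow_eq_zero_iff (by norm_num)|>.mp h'') hr
    subst hb
    have haer : a * e * r = 1 := by linear_combination hdet
    have har : a * r^2 = e^3 := by linear_combination -h3
    have hr4 : r = e^4 := by
      calc r = (a*e*r)*r := by rw [haer]; ring
        _ = e*(a*r^2) := by ring
        _ = e*e^3 := by rw [har]
        _ = e^4 := by ring
    rw [hr4] at haer
    have ha5 : a = (e^5)⁻¹ := by
      have h5e : e^5 ≠ 0 := pow_ne_zero _ he
      field_simp
      linear_combination haer
    exact ⟨e, he, by rw [hM, hr4, ha5]⟩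
  · exfalso
    have ha : a ≠ 0 := by
      intro h'; subst h'
      have hd : d = 0 := pow_eq_zero_iff (n := 3) (by norm_num) |>.mp (by linear_combination -h9)
      subst hd
      have hb : b = 0 := by
        have h' : b * p^2 = 0 := by linear_combination h7
        rcases mul_eq_zero.mp h' with h''|h''
        · exact h''
        · exact absurd (pow_eq_zero_iff (by norm_num)|>.mp h'') hp
      subst hb
      have hc : c = 0 := by
        have h' : c * p^2 = 0 := by linear_combination h6
        rcases mul_eq_zero.mp h' with h''|h''
        · exact h''
        · exact absurd (pow_eq_zero_iff (by norm_num)|>.mp h'') hp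
      subst hc
      exact one_ne_zero (by linear_combination -hdet)
    have hd : d ≠ 0 := by
      intro h'; subst h'
      have h'' : a * p^2 = 0 := by linear_combination -h9
      rcases mul_eq_zero.mp h'' with h3'|h3'
      · exact ha h3'
      · exact hp (pow_eq_zero_iff (by norm_num)|>.mp h3')
    have hI1 : (d*q - e*p)^3 = -(p^3*(b*q^2 + e^3)) := by
      linear_combination (-(q^3))*h9 + (-(q^2*p))*h7 + (-(q*p^2))*h5
    by_cases hl : b*q^2 + e^3 = 0
    · have hα : d*q - e*p = 0 := by
        apply pow_eq_zero_iff (n := 3) (by norm_num) |>.mp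
        rw [hI1, hl, mul_zero, neg_zero]
      have hb' : b*p - a*q = 0 := by
        have h' : p^2*(b*p - a*q) = 0 := by linear_combination p*h7 + 3*d^2*hα + 3*q*h9
        rcases mul_eq_zero.mp h' with h''|h''
        · exact absurd (pow_eq_zero_iff (by norm_num)|>.mp h'') hp
        · exact h''
      have hae : a*e - b*d = 0 := by
        have h' : p*(a*e - b*d) = 0 := by linear_combination (-a)*hα + (-d)*hb'
        rcases mul_eq_zero.mp h' with h''|h''
        · exact absurd h'' hp
        · exact h''
      exact one_ne_zero (by linear_combination (-1 : ℂ)*hdet + r*hae + f*hb' + c*hα)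
    · have hα : d*q - e*p ≠ 0 := by
        intro h'
        rw [h'] at hI1
        have h'' : p^3*(b*q^2+e^3) = 0 := by linear_combination hI1
        rcases mul_eq_zero.mp h'' with h3'|h3'
        · exact hp (pow_eq_zero_iff (by norm_num)|>.mp h3')
        · exact hl h3'
      have key : ∀ s : ℂ, -((d*q-e*p)*s^3) + (b*p-a*q)*s + (a*e-b*d) = 0 → p*s = d := by
        intro s hs
        have e1 : a*((e*r-f*q)*(-s^3) + (c*q-b*r)*s + (b*f-c*e))
            + b*((f*p-d*r)*(-s^3) + (a*r-c*p)*s + (c*d-a*f)) = -s^3 := by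
          linear_combination (-(s^3))*hdet + (-c)*hs
        have e2 : d*((e*r-f*q)*(-s^3) + (c*q-b*r)*s + (b*f-c*e))
            + e*((f*p-d*r)*(-s^3) + (a*r-c*p)*s + (c*d-a*f)) = s := by
          linear_combination s*hdet + (-f)*hs
        have e3 : p*((e*r-f*q)*(-s^3) + (c*q-b*r)*s + (b*f-c*e))
            + q*((f*p-d*r)*(-s^3) + (a*r-c*p)*s + (c*d-a*f)) = 1 := by
          linear_combination hdet + (-r)*hs
        have h' : (a*((e*r-f*q)*(-s^3) + (c*q-b*r)*s + (b*f-c*e))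
              + b*((f*p-d*r)*(-s^3) + (a*r-c*p)*s + (c*d-a*f)))
            * (p*((e*r-f*q)*(-s^3) + (c*q-b*r)*s + (b*f-c*e))
              + q*((f*p-d*r)*(-s^3) + (a*r-c*p)*s + (c*d-a*f)))^2
            + (d*((e*r-f*q)*(-s^3) + (c*q-b*r)*s + (b*f-c*e))
              + e*((f*p-d*r)*(-s^3) + (a*r-c*p)*s + (c*d-a*f)))^3 = 0 := by
          rw [e1, e2, e3]; ring
        have hH : (b*q^2+e^3) * ((f*p-d*r)*(-s^3) + (a*r-c*p)*s + (c*d-a*f))^3 = 0 := by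
          linear_combination h'
            + (((e*r-f*q)*(-s^3) + (c*q-b*r)*s + (b*f-c*e))^3)*h9
            + (-(((e*r-f*q)*(-s^3) + (c*q-b*r)*s + (b*f-c*e))^2
                *((f*p-d*r)*(-s^3) + (a*r-c*p)*s + (c*d-a*f))))*h7
            + (((e*r-f*q)*(-s^3) + (c*q-b*r)*s + (b*f-c*e))
                *((f*p-d*r)*(-s^3) + (a*r-c*p)*s + (c*d-a*f))^2)*h5
        have hu1 : (f*p-d*r)*(-s^3) + (a*r-c*p)*s + (c*d-a*f) = 0 := by
          rcases mul_eq_zero.mp hH with h''|h''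
          · exact absurd h'' hl
          · exact pow_eq_zero_iff (by norm_num)|>.mp h''
        linear_combination d*e3 - p*e2 + (p*e - d*q)*hu1
      have key' : ∀ y : ℂ, -((d*q-e*p)*y^3) + (b*p-a*q)*p^2*y + (a*e-b*d)*p^3 = 0 → y = d := by
        intro y hy
        have hbridge : -((d*q-e*p)*(y/p)^3) + (b*p-a*q)*(y/p) + (a*e-b*d)
            = (-((d*q-e*p)*y^3) + (b*p-a*q)*p^2*y + (a*e-b*d)*p^3)/p^3 := by
          field_simp
        have hk := key (y/p) (by rw [hbridge, hy, zero_div])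
        rw [mul_comm, div_mul_cancel₀ y hp] at hk
        exact hk
      have hquad : ∀ y : ℂ, (d*q-e*p)*y^2 + (d*q-e*p)*d*y + ((d*q-e*p)*d^2 - (b*p-a*q)*p^2) = 0
          → y = d := by
        intro y hy
        exact key' y (by linear_combination (d - y)*hy + (d*q-e*p)*h9)
      obtain ⟨w, hw⟩ := IsAlgClosed.exists_pow_nat_eq
        (-3*(d*q-e*p)^2*d^2 + 4*(d*q-e*p)*(b*p-a*q)*p^2) (n := 2) (by norm_num)
      have hrootpm : ∀ w' : ℂ, w'^2 = w^2 →
          (-((d*q-e*p)*d) + w')/(2*(d*q-e*p)) = d := by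
        intro w' hw'
        apply hquad
        have hid : (d*q-e*p)*((-((d*q-e*p)*d) + w')/(2*(d*q-e*p)))^2
            + (d*q-e*p)*d*((-((d*q-e*p)*d) + w')/(2*(d*q-e*p)))
            + ((d*q-e*p)*d^2 - (b*p-a*q)*p^2)
            = (w'^2 - (-3*(d*q-e*p)^2*d^2 + 4*(d*q-e*p)*(b*p-a*q)*p^2))/(4*(d*q-e*p)) := by
          field_simp
          ring
        rw [hid, hw', hw, sub_self, zero_div]
      have hy1 := hrootpm w rfl
      have hy2 := hrootpm (-w) (by ring)
      have h2A : (2*(d*q-e*p)) ≠ 0 := mul_ne_zero two_ne_zero hα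
      have hweq : -((d*q-e*p)*d) + w = -((d*q-e*p)*d) + -w := by
        have := hy1.trans hy2.symm
        have h4 := congrArg (fun z => z*(2*(d*q-e*p))) this
        simpa [div_mul_cancel₀ _ h2A] using h4
      have hw0 : w = 0 := by linear_combination (1/2 : ℂ)*hweq
      rw [hw0, add_zero] at hy1
      have hiff := (div_eq_iff h2A).mp hy1
      have h3d : (3*(d*q-e*p))*d = 0 := by linear_combination -hiff
      rcases mul_eq_zero.mp h3d with h''|h''
      · rcases mul_eq_zero.mp h'' with h3'|h3'
        · norm_num at h3'
        · exact hα h3'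
      · exact hd h''

/-- If marked points on the cuspidal cubic have infinite `SL(3,ℂ)` stabilizer, every
marked point is the cusp `(1:0:0)` or the smooth inflection point `(0:0:1)`. -/
theorem cuspidal_cubic_stabilizer (n : ℕ) (p : Fin n → P2)
    (hp : ∀ i, p i ∈ Ccusp)
    (hstab : {g : SL3 | act g '' Ccusp = Ccusp ∧ ∀ i, act g (p i) = p i}.Infinite) :
    ∀ i, p i = ptCusp ∨ p i = ptFlex := by
  intro i
  have hvne : (p i).rep ≠ 0 := Projectivization.rep_nonzero _
  have hvC : (p i).rep 0 * (p i).rep 2 ^ 2 + (p i).rep 1 ^ 3 = 0 := hp i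
  have hmk : Projectivization.mk ℂ ((p i).rep) hvne = p i := Projectivization.mk_rep _
  by_cases h2 : (p i).rep 2 = 0
  · left
    have h1 : (p i).rep 1 = 0 := by
      have h' : ((p i).rep 1)^3 = 0 := by rw [h2] at hvC; linear_combination hvC
      exact pow_eq_zero_iff (by norm_num) |>.mp h'
    have h0 : (p i).rep 0 ≠ 0 := by
      intro h0
      apply hvne
      funext j
      fin_cases j
      · exact h0
      · exact h1
      · exact h2
    rw [← hmk]
    unfold ptCusp
    rw [Projectivization.mk_eq_mk_iff]
    refine ⟨Units.mk0 _ h0, ?_⟩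
    funext j
    fin_cases j <;>
      simp [Units.smul_def, h1, h2]
  · by_cases h1 : (p i).rep 1 = 0
    · right
      have h0 : (p i).rep 0 = 0 := by
        have h' : (p i).rep 0 * ((p i).rep 2)^2 = 0 := by rw [h1] at hvC; linear_combination hvC
        rcases mul_eq_zero.mp h' with h''|h''
        · exact h''
        · exact absurd (pow_eq_zero_iff (by norm_num)|>.mp h'') h2
      rw [← hmk]
      unfold ptFlex
      rw [Projectivization.mk_eq_mk_iff]
      refine ⟨Units.mk0 _ h2, ?_⟩
      funext j
      fin_cases j <;>
        simp [Units.smul_def, h0, h1]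
    · exfalso
      have hfin : Set.Finite {t : ℂ | t^3 = 1} := by
        have hP : ((Polynomial.X : Polynomial ℂ)^3 - Polynomial.C 1) ≠ 0 :=
          Polynomial.X_pow_sub_C_ne_zero (by norm_num) 1
        have hfin' := Polynomial.finite_setOf_isRoot hP
        convert hfin' using 1
        ext t
        simp [Polynomial.IsRoot, sub_eq_zero]
      have hdiag : ∀ g ∈ {g : SL3 | act g '' Ccusp = Ccusp ∧ ∀ i, act g (p i) = p i},
          ((g : Matrix (Fin 3) (Fin 3) ℂ) =
            !![(((g : Matrix (Fin 3) (Fin 3) ℂ) 1 1)^5)⁻¹, 0, 0;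
               0, (g : Matrix (Fin 3) (Fin 3) ℂ) 1 1, 0;
               0, 0, ((g : Matrix (Fin 3) (Fin 3) ℂ) 1 1)^4]) ∧
            ((g : Matrix (Fin 3) (Fin 3) ℂ) 1 1)^3 = 1 := by
        intro g hg
        obtain ⟨hgC, hgfix⟩ := hg
        obtain ⟨t, ht0, hmat⟩ := classify g (fun x hx => hgC ▸ Set.mem_image_of_mem _ hx)
        have h11 : (g : Matrix (Fin 3) (Fin 3) ℂ) 1 1 = t := by
          rw [hmat]
          norm_num
        have hfix := hgfix i
        rw [← hmk, act_mk, Projectivization.mk_eq_mk_iff] at hfix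
        obtain ⟨u, hu⟩ := hfix
        have hu1 := congrFun hu 1
        have hu2 := congrFun hu 2
        rw [hmat] at hu1 hu2
        simp only [Pi.smul_apply, Units.smul_def, smul_eq_mul, Matrix.mulVec,
          dotProduct, Fin.sum_univ_three, Matrix.cons_val', Matrix.cons_val_zero,
          Matrix.cons_val_one, Matrix.head_cons, Matrix.empty_val', Matrix.cons_val_fin_one,
          Matrix.head_fin_const, Matrix.of_apply, Matrix.cons_val_two, Matrix.tail_cons] at hu1 hu2
        have hut : (u : ℂ) = t := by
          apply mul_right_cancel₀ h1
          rw [hu1]; ring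
        have hut4 : (u : ℂ) = t^4 := by
          apply mul_right_cancel₀ h2
          rw [hu2]; ring
        have ht3 : t^3 = 1 := by
          have h4 : t^4 = t := by rw [← hut4, hut]
          have h5 : t*(t^3 - 1) = 0 := by linear_combination h4
          rcases mul_eq_zero.mp h5 with h''|h''
          · exact absurd h'' ht0
          · linear_combination h''
        rw [h11]
        exact ⟨hmat, ht3⟩
      have hinj : Set.InjOn (fun g : SL3 => (g : Matrix (Fin 3) (Fin 3) ℂ) 1 1)
          {g : SL3 | act g '' Ccusp = Ccusp ∧ ∀ i, act g (p i) = p i} := by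
        intro g hg g' hg' hgg
        have e1 := (hdiag g hg).1
        have e2 := (hdiag g' hg').1
        have h11 : (g : Matrix (Fin 3) (Fin 3) ℂ) 1 1 = (g' : Matrix (Fin 3) (Fin 3) ℂ) 1 1 := hgg
        apply Subtype.ext
        rw [e1, e2, h11]
      have himg : (fun g : SL3 => (g : Matrix (Fin 3) (Fin 3) ℂ) 1 1) ''
          {g : SL3 | act g '' Ccusp = Ccusp ∧ ∀ i, act g (p i) = p i} ⊆ {t : ℂ | t^3 = 1} := by
        rintro t ⟨g, hg, rfl⟩
        exact (hdiag g hg).2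
      exact hstab (Set.Finite.of_finite_image (hfin.subset himg) hinj)
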